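/- Let f be a twice continuously differentiable function on n×m real matrices (or on n×n symmetric matrices) satisfying the δ-RIP_{2r,2r} property with δ ∈ [0,1), and let M* be its global minimizer over the set of matrices of rank at most r (respectively, symmetric positive semidefinite matrices of rank at most r), with ∇f(M*) = 0 and rank(M*) ≤ r. Let M be any matrix of rank at most r in the feasible set, and let M₊ be any minimizer of ‖K − (M − (1/(1+δ))∇f(M))‖_F over all K in the feasible set (a Frobenius-orthogonal projection of the gradient step onto the rank-≤r manifold). Then f(M₊) − f(M*) ≤ (2δ/(1−δ)) · (f(M) − f(M*)). -/

import Mathlib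

open Matrix

attribute [local instance] Matrix.frobeniusSeminormedAddCommGroup
  Matrix.frobeniusNormedAddCommGroup Matrix.frobeniusNormedSpace

/-- Hessian quadratic/bilinear form of `f` at `x`, evaluated at directions `v, w`. -/
noncomputable def hess {E : Type*} [NormedAddCommGroup E] [NormedSpace ℝ E]
    (f : E → ℝ) (x v w : E) : ℝ :=
  iteratedFDeriv ℝ 2 f x ![v, w]

/-- Second-order critical point: vanishing gradient and positive semidefinite Hessian. -/
def IsSOCP {E : Type*} [NormedAddCommGroup E] [NormedSpace ℝ E]
    (f : E → ℝ) (x : E) : Prop :=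
  fderiv ℝ f x = 0 ∧ ∀ v : E, 0 ≤ hess f x v v

/-- The `δ`-RIP₂ᵣ,₂ₜ property (Frobenius norm). -/
def RIP {I J : Type*} [Fintype I] [Fintype J]
    (r t : ℕ) (δ : ℝ) (f : Matrix I J ℝ → ℝ) : Prop :=
  ∀ M K : Matrix I J ℝ, M.rank ≤ 2 * r → K.rank ≤ 2 * t →
    (1 - δ) * ‖K‖ ^ 2 ≤ hess f M K K ∧ hess f M K K ≤ (1 + δ) * ‖K‖ ^ 2

/-- The `κ`-BDP₂ₜ property. -/
def BDP {I J : Type*} [Fintype I] [Fintype J]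
    (t : ℕ) (κ : ℝ) (f : Matrix I J ℝ → ℝ) : Prop :=
  ∀ M M' K L : Matrix I J ℝ, M.rank ≤ 2 * t → M'.rank ≤ 2 * t →
    K.rank ≤ 2 * t → L.rank ≤ 2 * t →
    |hess f M K L - hess f M' K L| ≤ κ * ‖K‖ * ‖L‖

/-- Gradient of `f` at `M`, as a matrix (w.r.t. the Frobenius inner product). -/
noncomputable def mgrad {I J : Type*} [Fintype I] [Fintype J] [DecidableEq I] [DecidableEq J]
    (f : Matrix I J ℝ → ℝ) (M : Matrix I J ℝ) : Matrix I J ℝ :=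
  Matrix.of fun i j => fderiv ℝ f M (Matrix.single i j 1)

/-- Trace inner product `⟨X, Y⟩ = tr(Xᵀ Y)` of matrices. -/
noncomputable def minner {I J : Type*} [Fintype I] [Fintype J]
    (X Y : Matrix I J ℝ) : ℝ :=
  Matrix.trace (Xᵀ * Y)

/-- Objective of the factorized asymmetric problem (3). -/
noncomputable def ha {n m r : ℕ} (f : Matrix (Fin n) (Fin m) ℝ → ℝ)
    (p : Matrix (Fin n) (Fin r) ℝ × Matrix (Fin m) (Fin r) ℝ) : ℝ :=
  f (p.1 * p.2ᵀ)

/-- Objective of the regularized asymmetric problem (5). -/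
noncomputable def rhoA {n m r : ℕ} (f : Matrix (Fin n) (Fin m) ℝ → ℝ) (μ : ℝ)
    (p : Matrix (Fin n) (Fin r) ℝ × Matrix (Fin m) (Fin r) ℝ) : ℝ :=
  f (p.1 * p.2ᵀ) + μ / 4 * ‖p.1ᵀ * p.1 - p.2ᵀ * p.2‖ ^ 2

/-- Objective of the symmetric factorized problem (4). -/
noncomputable def hs {n r : ℕ} (f : Matrix (Fin n) (Fin n) ℝ → ℝ)
    (U : Matrix (Fin n) (Fin r) ℝ) : ℝ :=
  f (U * Uᵀ)


/-! Every point of a segment between two matrices of rank `≤ r`, and its direction, have rank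
`≤ 2r`, so along such segments RIP pins the second derivative of `f` between `(1 - δ)` and
`(1 + δ)` times `‖Y - X‖²`: `f` obeys quadratic upper and lower models on the feasible set.
Completing the square shows that the projected gradient step `M₊` minimizes the upper model
`⟨∇f(M), K - M⟩ + (1 + δ)/2 ‖K - M‖²` over feasible `K`; comparing with `K = M*` and using the
lower model at `M` gives `f(M₊) - f(M*) ≤ δ ‖M* - M‖²`, while the lower model at the critical
point `M*` gives `(1 - δ)/2 ‖M - M*‖² ≤ f(M) - f(M*)`. -/

lemma hess_eq_fderiv_fderiv {E : Type*} [NormedAddCommGroup E] [NormedSpace ℝ E]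
    (f : E → ℝ) (x v w : E) : hess f x v w = fderiv ℝ (fderiv ℝ f) x v w := by
  simp [hess, iteratedFDeriv_two_apply]

lemma le_add_deriv_add_half_of_deriv2_le {φ φ' φ'' : ℝ → ℝ} {U : ℝ}
    (hφ : ∀ t, HasDerivAt φ (φ' t) t) (hφ' : ∀ t, HasDerivAt φ' (φ'' t) t)
    (hU : ∀ t ∈ Set.Icc (0 : ℝ) 1, φ'' t ≤ U) :
    φ 1 ≤ φ 0 + φ' 0 + U / 2 := by
  have hmem : ∀ t ∈ interior (Set.Icc (0 : ℝ) 1), t ∈ Set.Icc (0 : ℝ) 1 :=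
    fun t ht => interior_subset ht
  -- `G` is the gap between the quadratic upper model and `φ`; it is convex with `G' 0 = 0`.
  set G' : ℝ → ℝ := fun t => φ' 0 + U * t - φ' t
  set G : ℝ → ℝ := fun t => φ 0 + φ' 0 * t + U / 2 * t ^ 2 - φ t
  have hG' : ∀ t, HasDerivAt G' (U - φ'' t) t := fun t =>
    ((((hasDerivAt_id' t).const_mul U).const_add (φ' 0)).sub (hφ' t)).congr_deriv (by ring)
  have hG : ∀ t, HasDerivAt G (G' t) t := fun t => by
    have h := ((((hasDerivAt_id' t).const_mul (φ' 0)).const_add (φ 0)).add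
      ((hasDerivAt_pow 2 t).const_mul (U / 2))).sub (hφ t)
    exact h.congr_deriv (by simp only [G']; ring)
  have hG'_mono : MonotoneOn G' (Set.Icc 0 1) :=
    monotoneOn_of_hasDerivWithinAt_nonneg (convex_Icc 0 1)
      (fun t _ => (hG' t).continuousAt.continuousWithinAt)
      (fun t _ => (hG' t).hasDerivWithinAt)
      (fun t ht => sub_nonneg.2 (hU t (hmem t ht)))
  have hG_mono : MonotoneOn G (Set.Icc 0 1) :=
    monotoneOn_of_hasDerivWithinAt_nonneg (convex_Icc 0 1)
      (fun t _ => (hG t).continuousAt.continuousWithinAt)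
      (fun t _ => (hG t).hasDerivWithinAt)
      (fun t ht => by
        simpa [G'] using hG'_mono (Set.left_mem_Icc.2 zero_le_one) (hmem t ht) (hmem t ht).1)
  have := hG_mono (Set.left_mem_Icc.2 zero_le_one) (Set.right_mem_Icc.2 zero_le_one) zero_le_one
  simp only [G] at this
  linarith

lemma add_deriv_add_half_le_of_le_deriv2 {φ φ' φ'' : ℝ → ℝ} {L : ℝ}
    (hφ : ∀ t, HasDerivAt φ (φ' t) t) (hφ' : ∀ t, HasDerivAt φ' (φ'' t) t)
    (hL : ∀ t ∈ Set.Icc (0 : ℝ) 1, L ≤ φ'' t) :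
    φ 0 + φ' 0 + L / 2 ≤ φ 1 := by
  have := le_add_deriv_add_half_of_deriv2_le (fun t => (hφ t).neg) (fun t => (hφ' t).neg)
    (U := -L) (fun t ht => neg_le_neg (hL t ht))
  simp only [Pi.neg_apply] at this
  linarith

section LineRestriction

variable {E : Type*} [NormedAddCommGroup E] [NormedSpace ℝ E] {f : E → ℝ}

lemma hasDerivAt_const_add_smul (X D : E) (t : ℝ) :
    HasDerivAt (fun s : ℝ => X + s • D) D t :=
  ((hasDerivAt_id t).smul_const D).const_add X |>.congr_deriv (one_smul ℝ D)

lemma ContDiff.hasDerivAt_apply_line (hf : ContDiff ℝ 2 f) (X D : E) (t : ℝ) :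
    HasDerivAt (fun s : ℝ => f (X + s • D)) (fderiv ℝ f (X + t • D) D) t :=
  ((hf.differentiable two_ne_zero _).hasFDerivAt).comp_hasDerivAt t
    (hasDerivAt_const_add_smul X D t)

lemma ContDiff.hasDerivAt_fderiv_apply_line (hf : ContDiff ℝ 2 f) (X D : E) (t : ℝ) :
    HasDerivAt (fun s : ℝ => fderiv ℝ f (X + s • D) D) (hess f (X + t • D) D D) t := by
  have hdf : Differentiable ℝ (fderiv ℝ f) :=
    (hf.fderiv_right le_rfl).differentiable one_ne_zero
  rw [hess_eq_fderiv_fderiv]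
  simpa using ((hdf _).hasFDerivAt.comp_hasDerivAt t
    (hasDerivAt_const_add_smul X D t)).clm_apply (hasDerivAt_const t D)

lemma ContDiff.apply_add_le_of_hess_le (hf : ContDiff ℝ 2 f) {X D : E} {U : ℝ}
    (hU : ∀ t ∈ Set.Icc (0 : ℝ) 1, hess f (X + t • D) D D ≤ U) :
    f (X + D) ≤ f X + fderiv ℝ f X D + U / 2 := by
  simpa using le_add_deriv_add_half_of_deriv2_le (hf.hasDerivAt_apply_line X D)
    (hf.hasDerivAt_fderiv_apply_line X D) hU

lemma ContDiff.le_apply_add_of_le_hess (hf : ContDiff ℝ 2 f) {X D : E} {L : ℝ}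
    (hL : ∀ t ∈ Set.Icc (0 : ℝ) 1, L ≤ hess f (X + t • D) D D) :
    f X + fderiv ℝ f X D + L / 2 ≤ f (X + D) := by
  simpa using add_deriv_add_half_le_of_le_deriv2 (hf.hasDerivAt_apply_line X D)
    (hf.hasDerivAt_fderiv_apply_line X D) hL

end LineRestriction

namespace Matrix

variable {I J : Type*} [Fintype J]

lemma rank_add_le {K : Type*} [Field K] (A B : Matrix I J K) :
    (A + B).rank ≤ A.rank + B.rank := by
  classical
  have hle : LinearMap.range (A + B).mulVecLin ≤
      LinearMap.range A.mulVecLin ⊔ LinearMap.range B.mulVecLin := by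
    rintro x ⟨v, rfl⟩
    rw [mulVecLin_add]
    exact Submodule.add_mem_sup (LinearMap.mem_range_self _ v) (LinearMap.mem_range_self _ v)
  exact (Submodule.finrank_mono hle).trans (Submodule.finrank_add_le_finrank_add_finrank _ _)

lemma rank_smul_le {K : Type*} [Field K] (c : K) (A : Matrix I J K) :
    (c • A).rank ≤ A.rank := by
  classical
  refine Submodule.finrank_mono ?_
  rintro x ⟨v, rfl⟩
  exact ⟨c • v, by simp⟩

lemma rank_smul_add_smul_le {K : Type*} [Field K] (a b : K) (A B : Matrix I J K) :
    (a • A + b • B).rank ≤ A.rank + B.rank :=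
  (rank_add_le _ _).trans (add_le_add (rank_smul_le a A) (rank_smul_le b B))

variable [Fintype I]

lemma frobenius_norm_sq (A : Matrix I J ℝ) : ‖A‖ ^ 2 = ∑ i, ∑ j, A i j ^ 2 := by
  rw [frobenius_norm_def, ← Real.rpow_natCast, ← Real.rpow_mul (by positivity)]
  norm_num

lemma minner_eq_sum (A B : Matrix I J ℝ) : minner A B = ∑ i, ∑ j, A i j * B i j := by
  rw [minner, trace, Finset.sum_comm]
  simp [mul_apply]

lemma frobenius_norm_add_sq (A B : Matrix I J ℝ) :
    ‖A + B‖ ^ 2 = ‖A‖ ^ 2 + 2 * minner A B + ‖B‖ ^ 2 := by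
  simp only [frobenius_norm_sq, minner_eq_sum, add_apply, Finset.mul_sum,
    ← Finset.sum_add_distrib]
  exact Finset.sum_congr rfl fun i _ => Finset.sum_congr rfl fun j _ => by ring

lemma minner_smul_left (c : ℝ) (A B : Matrix I J ℝ) : minner (c • A) B = c * minner A B := by
  simp [minner, trace_smul]

lemma fderiv_apply_eq_minner_mgrad [DecidableEq I] [DecidableEq J]
    (f : Matrix I J ℝ → ℝ) (M D : Matrix I J ℝ) :
    fderiv ℝ f M D = minner (mgrad f M) D := by
  conv_lhs => rw [matrix_eq_sum_single D]
  simp only [map_sum, minner_eq_sum, mgrad, of_apply]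
  refine Finset.sum_congr rfl fun i _ => Finset.sum_congr rfl fun j _ => ?_
  rw [show single i j (D i j) = D i j • single i j 1 by simp [smul_single], _root_.map_smul,
    smul_eq_mul, mul_comm]

lemma minner_add_norm_sq_le_of_norm_sub_le {L : ℝ} (hL : 0 < L) {M G P Q : Matrix I J ℝ}
    (h : ‖P - (M - (1 / L) • G)‖ ≤ ‖Q - (M - (1 / L) • G)‖) :
    minner G (P - M) + L / 2 * ‖P - M‖ ^ 2 ≤ minner G (Q - M) + L / 2 * ‖Q - M‖ ^ 2 := by
  have hexpand : ∀ P : Matrix I J ℝ, ‖P - (M - (1 / L) • G)‖ ^ 2 =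
      2 / L * (minner G (P - M) + L / 2 * ‖P - M‖ ^ 2) + (1 / L) ^ 2 * ‖G‖ ^ 2 := fun P => by
    rw [show P - (M - (1 / L) • G) = (1 / L) • G + (P - M) by abel, frobenius_norm_add_sq,
      minner_smul_left, norm_smul, mul_pow, Real.norm_of_nonneg (by positivity)]
    field_simp
    ring
  have hsq := pow_le_pow_left₀ (norm_nonneg _) h 2
  rw [hexpand, hexpand] at hsq
  exact le_of_mul_le_mul_left (by linarith) (by positivity : (0 : ℝ) < 2 / L)

end Matrix

section RIP

variable {I J : Type*} [Fintype I] [Fintype J] {r : ℕ} {δ : ℝ} {f : Matrix I J ℝ → ℝ}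
  {X Y : Matrix I J ℝ}

lemma RIP.hess_segment (hrip : RIP r r δ f) (hX : X.rank ≤ r) (hY : Y.rank ≤ r) (t : ℝ) :
    (1 - δ) * ‖Y - X‖ ^ 2 ≤ hess f (X + t • (Y - X)) (Y - X) (Y - X) ∧
      hess f (X + t • (Y - X)) (Y - X) (Y - X) ≤ (1 + δ) * ‖Y - X‖ ^ 2 := by
  refine hrip _ _ ?_ ?_
  · rw [show X + t • (Y - X) = (1 - t) • X + t • Y by module]
    exact (Matrix.rank_smul_add_smul_le _ _ X Y).trans (by omega)
  · rw [show Y - X = (-1 : ℝ) • X + (1 : ℝ) • Y by module]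
    exact (Matrix.rank_smul_add_smul_le _ _ X Y).trans (by omega)

lemma RIP.apply_le (hrip : RIP r r δ f) (hf : ContDiff ℝ 2 f) (hX : X.rank ≤ r)
    (hY : Y.rank ≤ r) : f Y ≤ f X + fderiv ℝ f X (Y - X) + (1 + δ) / 2 * ‖Y - X‖ ^ 2 := by
  have h := hf.apply_add_le_of_hess_le fun t _ => (hrip.hess_segment hX hY t).2
  rw [add_sub_cancel] at h
  -- `h` reaches `fderiv` through the generic normed-space instances, which `linarith` would
  -- treat as a different atom; `congr` identifies them up to defeq.
  exact h.trans_eq (by congr 1; ring)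

lemma RIP.le_apply (hrip : RIP r r δ f) (hf : ContDiff ℝ 2 f) (hX : X.rank ≤ r)
    (hY : Y.rank ≤ r) : f X + fderiv ℝ f X (Y - X) + (1 - δ) / 2 * ‖Y - X‖ ^ 2 ≤ f Y := by
  have h := hf.le_apply_add_of_le_hess fun t _ => (hrip.hess_segment hX hY t).1
  rw [add_sub_cancel] at h
  exact h.trans_eq' (by congr 1; ring)

end RIP

theorem statement0_general (n m r : ℕ) (δ : ℝ) (hδ0 : 0 ≤ δ) (hδ1 : δ < 1)
    (f : Matrix (Fin n) (Fin m) ℝ → ℝ) (hf : ContDiff ℝ 2 f) (hrip : RIP r r δ f)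
    (Mstar : Matrix (Fin n) (Fin m) ℝ)
    (hcrit : fderiv ℝ f Mstar = 0) (hrankstar : Mstar.rank ≤ r)
    (M Mplus : Matrix (Fin n) (Fin m) ℝ) (hM : M.rank ≤ r) (hMplus : Mplus.rank ≤ r)
    (hproj : ∀ K : Matrix (Fin n) (Fin m) ℝ, K.rank ≤ r →
      ‖Mplus - (M - (1 / (1 + δ)) • mgrad f M)‖ ≤ ‖K - (M - (1 / (1 + δ)) • mgrad f M)‖) :
    f Mplus - f Mstar ≤ 2 * δ / (1 - δ) * (f M - f Mstar) := by
  have hupper := hrip.apply_le hf hM hMplus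
  have hlower := hrip.le_apply hf hM hrankstar
  rw [Matrix.fderiv_apply_eq_minner_mgrad] at hupper hlower
  have hstep := Matrix.minner_add_norm_sq_le_of_norm_sub_le (by linarith) (hproj Mstar hrankstar)
  have hdecrease : f Mplus - f Mstar ≤ δ * ‖Mstar - M‖ ^ 2 := by linarith
  have hgap : (1 - δ) / 2 * ‖Mstar - M‖ ^ 2 ≤ f M - f Mstar := by
    have h := hrip.le_apply hf hrankstar hM
    rw [hcrit, _root_.zero_apply, norm_sub_rev] at h
    linarith
  have hδ1' : 0 < 1 - δ := sub_pos.2 hδ1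
  calc f Mplus - f Mstar ≤ δ * ‖Mstar - M‖ ^ 2 := hdecrease
    _ = 2 * δ / (1 - δ) * ((1 - δ) / 2 * ‖Mstar - M‖ ^ 2) := by field_simp [hδ1'.ne']
    _ ≤ 2 * δ / (1 - δ) * (f M - f Mstar) :=
      mul_le_mul_of_nonneg_left hgap (div_nonneg (by positivity) hδ1'.le)

/-- One step of the projected gradient (SVP) iteration decreases the optimality gap
by a factor `2δ/(1-δ)`. -/
theorem statement0 (n m r : ℕ) (δ : ℝ) (hδ0 : 0 ≤ δ) (hδ1 : δ < 1)
    (f : Matrix (Fin n) (Fin m) ℝ → ℝ) (hf : ContDiff ℝ 2 f) (hrip : RIP r r δ f)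
    (Mstar : Matrix (Fin n) (Fin m) ℝ)
    (hmin : ∀ K : Matrix (Fin n) (Fin m) ℝ, K.rank ≤ r → f Mstar ≤ f K)
    (hcrit : fderiv ℝ f Mstar = 0) (hrankstar : Mstar.rank ≤ r)
    (M Mplus : Matrix (Fin n) (Fin m) ℝ) (hM : M.rank ≤ r) (hMplus : Mplus.rank ≤ r)
    (hproj : ∀ K : Matrix (Fin n) (Fin m) ℝ, K.rank ≤ r →
      ‖Mplus - (M - (1 / (1 + δ)) • mgrad f M)‖ ≤ ‖K - (M - (1 / (1 + δ)) • mgrad f M)‖) :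
    f Mplus - f Mstar ≤ 2 * δ / (1 - δ) * (f M - f Mstar) :=
  statement0_general n m r δ hδ0 hδ1 f hf hrip Mstar hcrit hrankstar M Mplus hM hMplus hproj
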